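/- Fix integers k ≥ 0, q ≥ 0 and n with k ≤ (n − 4)/3. Let G = (G_1, …, G_n) be a collection of n graphs on a common vertex set V with |V| = n such that σ₂(G_i) ≥ n + k for all i ∈ {1, …, n}. Let H be a rainbow linear forest in G with exactly k edges and injective coloring c : E(H) → {1, …, n}, whose components are H_u, H_v (containing the vertices u and v, respectively, as endpoints; these components may be single vertices) together with H_1, …, H_q, where each H_j (j ∈ {1, …, q}) has at least one edge. Suppose P* is a rainbow path of G with vertex set exactly V ∖ (V(H_u) ∪ V(H_v)) such that each H_j (j ∈ {1, …, q}) is a subpath of P* whose edges receive the same colors as under c, and every edge of P* not belonging to H receives a color in {1, …, n} ∖ c(E(H)). Then there exists a rainbow path P_0 of G with vertex set exactly V(P*) ∪ V(H_u) such that u is an endpoint of P_0, each of H_1, …, H_q and H_u is a subpath of P_0 whose edges receive the same colors as under c, and every edge of P_0 not belonging to H receives a color in {1, …, n} ∖ c(E(H)). -/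

import Mathlib

open SimpleGraph

/-- A coloring `c` witnesses that the collection `G` contains the edge set `E` as a rainbow
subgraph: `c` is injective on `E` and every edge `e ∈ E` lies in the graph of its color. -/
def RainbowColoring {V : Type*} {m : ℕ} (G : Fin m → SimpleGraph V) (E : Set (Sym2 V))
    (c : Sym2 V → Fin m) : Prop :=
  Set.InjOn c E ∧ ∀ e ∈ E, e ∈ (G (c e)).edgeSet

/-- The collection `G` contains the edge set `E` as a rainbow subgraph. -/
def ContainsRainbow {V : Type*} {m : ℕ} (G : Fin m → SimpleGraph V) (E : Set (Sym2 V)) : Prop :=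
  ∃ c, RainbowColoring G E c

/-- `G` contains a rainbow Hamiltonian `u,v`-path. -/
def RainbowHamPath {V : Type*} [DecidableEq V] {m : ℕ} (G : Fin m → SimpleGraph V)
    (u v : V) : Prop :=
  ∃ p : (⊤ : SimpleGraph V).Walk u v, p.IsHamiltonian ∧ ContainsRainbow G {e | e ∈ p.edges}

/-- `G` contains a rainbow Hamiltonian cycle. -/
def RainbowHamCycle {V : Type*} [DecidableEq V] {m : ℕ} (G : Fin m → SimpleGraph V) : Prop :=
  ∃ (a : V) (p : (⊤ : SimpleGraph V).Walk a a), p.IsHamiltonianCycle ∧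
    ContainsRainbow G {e | e ∈ p.edges}

/-- `σ₂(F) ≥ s`: any two distinct non-adjacent vertices have degree sum at least `s`. -/
def SigmaTwoGE {V : Type*} (F : SimpleGraph V) (s : ℕ) : Prop :=
  ∀ ⦃x y : V⦄, x ≠ y → ¬F.Adj x y → s ≤ (F.neighborSet x).ncard + (F.neighborSet y).ncard

/-- A linear forest: an acyclic graph with maximum degree at most 2
(equivalently, every component is a path). -/
def IsLinearForest {V : Type*} (H : SimpleGraph V) : Prop :=
  H.IsAcyclic ∧ ∀ x : V, (H.neighborSet x).ncard ≤ 2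


/-!
The component `H_u` has maximum degree two and contains the vertex `u` of degree at most one, so
it is a path from `u` to some `w`. Counting vertices and edges of `H_u`, `H_v` and `P*` shows that
the colors of `c` on `H` together with those of `cP` off `H` number at most `n - 3`, so two
colors are free. If `w` is adjacent to an end of `P*` in the graph of a free color, attach `H_u`
there. Otherwise write `P* = x₀ ⋯ xₘ`; since `w` and `x₀` are non-adjacent, `σ₂` gives two distinct
free colors `g₁, g₂` with `|S| + |T| > m + |E(H) ∩ E(P*)|` for `S = {i < m | w xᵢ ∈ G_{g₁}}` and
`T = {i < m | x₀ xᵢ₊₁ ∈ G_{g₂}}`. By pigeonhole some `i ∈ S ∩ T` has `xᵢ xᵢ₊₁ ∉ H`, and the Pósa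
rotation `H_u, xᵢ ⋯ x₀, xᵢ₊₁ ⋯ xₘ` is the required path, with new edges colored `g₁` and `g₂`.
-/

theorem List.ncard_setOf_mem {α : Type*} {l : List α} (hl : l.Nodup) :
    {x | x ∈ l}.ncard = l.length := by
  classical
  rw [← List.coe_toFinset, Set.ncard_coe_finset, List.toFinset_card_of_nodup hl]

theorem Set.exists_mem_inter_notMem_of_ncard_lt {S T C : Set ℕ} {m : ℕ} (hS : S ⊆ Set.Iio m)
    (hT : T ⊆ Set.Iio m) (hC : C ⊆ Set.Iio m) (h : m + C.ncard < S.ncard + T.ncard) :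
    ∃ i ∈ S ∩ T, i ∉ C := by
  have hfin := Set.finite_Iio m
  have hunion : (S ∪ T).ncard ≤ m :=
    (Set.ncard_le_ncard (Set.union_subset hS hT) hfin).trans_eq (Set.ncard_Iio_nat m)
  have := Set.ncard_inter_add_ncard_union S T (hfin.subset hS) (hfin.subset hT)
  exact Set.exists_mem_notMem_of_ncard_lt_ncard (by omega) (hfin.subset hC)

theorem Set.ncard_image_piecewise_union_le {α β : Type*} [Finite α] {s t : Set α}
    [DecidablePred (· ∈ s)] (f g : α → β) :
    (s.piecewise f g '' (s ∪ t)).ncard ≤ s.ncard + (t \ s).ncard := by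
  have hsub : s.piecewise f g '' (s ∪ t) ⊆ f '' s ∪ g '' (t \ s) := by
    rintro _ ⟨x, hx, rfl⟩
    by_cases hxs : x ∈ s
    · exact .inl ⟨x, hxs, (Set.piecewise_eq_of_mem _ _ _ hxs).symm⟩
    · exact .inr ⟨x, ⟨hx.resolve_left hxs, hxs⟩, (Set.piecewise_eq_of_notMem _ _ _ hxs).symm⟩
  calc _ ≤ (f '' s ∪ g '' (t \ s)).ncard := Set.ncard_le_ncard hsub (Set.toFinite _)
    _ ≤ _ := (Set.ncard_union_le _ _).trans (add_le_add (Set.ncard_image_le (Set.toFinite _))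
      (Set.ncard_image_le (Set.toFinite _)))

theorem Set.one_lt_ncard_compl_image_piecewise {α : Type*} [Finite α] {n : ℕ} {s t : Set α}
    [DecidablePred (· ∈ s)] (f g : α → Fin n) (h : s.ncard + t.ncard + 2 ≤ n + (t ∩ s).ncard) :
    1 < (s.piecewise f g '' (s ∪ t))ᶜ.ncard := by
  have himage := Set.ncard_image_piecewise_union_le (s := s) (t := t) f g
  have hsplit := Set.ncard_inter_add_ncard_sdiff_eq_ncard t s
  rw [Set.ncard_compl, Nat.card_eq_fintype_card, Fintype.card_fin]
  omega

namespace RainbowColoring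

variable {V : Type*} {m : ℕ} {G : Fin m → SimpleGraph V} {D E : Set (Sym2 V)}
  {c d : Sym2 V → Fin m}

theorem mono (hd : RainbowColoring G D d) (hED : E ⊆ D) : RainbowColoring G E d :=
  ⟨hd.1.mono hED, fun e he => hd.2 e (hED he)⟩

theorem of_subsingleton {g : Fin m} (hE : E.Subsingleton) (hEg : E ⊆ (G g).edgeSet) :
    RainbowColoring G E fun _ => g :=
  ⟨fun _ h₁ _ h₂ _ => hE h₁ h₂, hEg⟩

theorem union_piecewise [DecidablePred (· ∈ D)] (hd : RainbowColoring G D d)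
    (hc : RainbowColoring G E c) (hfresh : ∀ e ∈ E, e ∉ D → ∀ e' ∈ D, c e ≠ d e') :
    RainbowColoring G (D ∪ E) (D.piecewise d c) := by
  have key : ∀ e ∈ D ∪ E, (e ∈ D ∧ D.piecewise d c e = d e) ∨
      (e ∈ E ∧ e ∉ D ∧ D.piecewise d c e = c e) := by
    intro e he
    by_cases heD : e ∈ D
    · exact .inl ⟨heD, Set.piecewise_eq_of_mem _ _ _ heD⟩
    · exact .inr ⟨he.resolve_left heD, heD, Set.piecewise_eq_of_notMem _ _ _ heD⟩
  refine ⟨fun e₁ h₁ e₂ h₂ h => ?_, fun e he => ?_⟩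
  · rcases key e₁ h₁ with ⟨h₁, hv₁⟩ | ⟨h₁, h₁', hv₁⟩ <;>
      rcases key e₂ h₂ with ⟨h₂, hv₂⟩ | ⟨h₂, h₂', hv₂⟩ <;> rw [hv₁, hv₂] at h
    · exact hd.1 h₁ h₂ h
    · exact absurd h.symm (hfresh e₂ h₂ h₂' e₁ h₁)
    · exact absurd h (hfresh e₁ h₁ h₁' e₂ h₂)
    · exact hc.1 h₁ h₂ h
  · rcases key e he with ⟨he, hv⟩ | ⟨he, -, hv⟩ <;> rw [hv]
    exacts [hd.2 e he, hc.2 e he]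

theorem union_const [DecidablePred (· ∈ D)] {g : Fin m} (hd : RainbowColoring G D d)
    (hE : E.Subsingleton) (hEg : E ⊆ (G g).edgeSet) (hg : ∀ e ∈ D, d e ≠ g) :
    RainbowColoring G (D ∪ E) (D.piecewise d fun _ => g) :=
  hd.union_piecewise (of_subsingleton hE hEg) fun _ _ _ e' he' => (hg e' he').symm

theorem agree_of_subset {H : SimpleGraph V} (hd : RainbowColoring G D d)
    (hHD : H.edgeSet ⊆ D) (hdc : ∀ e ∈ H.edgeSet, d e = c e) (hED : E ⊆ D) :
    RainbowColoring G E d ∧ (∀ e ∈ E, e ∈ H.edgeSet → d e = c e) ∧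
      ∀ e ∈ E, e ∉ H.edgeSet → ∀ e' ∈ H.edgeSet, d e ≠ c e' := by
  refine ⟨hd.mono hED, fun e _ => hdc e, fun e he heH e' he' h => heH ?_⟩
  rw [← hdc e' he'] at h
  rwa [hd.1 (hED he) (hHD he') h]

end RainbowColoring

namespace SimpleGraph

variable {V : Type*} {G H F : SimpleGraph V}

theorem Walk.exists_isPath_forall_adj_mem_support [Fintype V] {w u : V} (q : H.Walk w u)
    (hq : q.IsPath) :
    ∃ (w' : V) (q' : H.Walk w' u), q'.IsPath ∧ ∀ y, H.Adj w' y → y ∈ q'.support := by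
  by_cases h : ∀ y, H.Adj w y → y ∈ q.support
  · exact ⟨w, q, hq, h⟩
  push Not at h
  obtain ⟨y, hy, hyq⟩ := h
  have := (hq.cons (h := hy.symm) hyq).length_lt
  exact exists_isPath_forall_adj_mem_support (q.cons hy.symm) (hq.cons hyq)
termination_by Fintype.card V - q.length
decreasing_by simp only [Walk.length_cons] at this ⊢; omega

theorem Walk.IsPath.mk_mem_edges_of_adj [Finite V] {u w x y : V} {q : H.Walk u w}
    (hq : q.IsPath) (hdeg : ∀ x, (H.neighborSet x).ncard ≤ 2)
    (hu : (H.neighborSet u).ncard ≤ 1) (hx : x ∈ q.support) (hxw : x ≠ w) (hxy : H.Adj x y) :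
    s(x, y) ∈ q.edges := by
  obtain ⟨i, rfl, hi⟩ := Walk.mem_support_iff_exists_getVert.mp hx
  have hi' : i < q.length := lt_of_le_of_ne hi fun h => hxw (h ▸ q.getVert_length)
  -- Away from its end, `q` already meets every vertex in as many edges as `H` allows.
  suffices q.toSubgraph.neighborSet (q.getVert i) = H.neighborSet (q.getVert i) by
    rw [← Walk.mem_edges_toSubgraph, Subgraph.mem_edgeSet, ← Subgraph.mem_neighborSet, this]
    exact hxy
  refine Set.eq_of_subset_of_ncard_le (fun y hy => q.toSubgraph.adj_sub hy) ?_ (Set.toFinite _)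
  rcases Nat.eq_zero_or_pos i with rfl | hi0
  · rw [Walk.getVert_zero, hq.neighborSet_toSubgraph_startpoint
      (Walk.not_nil_iff_lt_length.mpr hi'), Set.ncard_singleton]
    exact hu
  · rw [hq.ncard_neighborSet_toSubgraph_internal_eq_two hi0.ne' hi']
    exact hdeg _

theorem exists_isPath_support_eq_reachable [Fintype V]
    (hdeg : ∀ x, (H.neighborSet x).ncard ≤ 2) {u : V} (hu : (H.neighborSet u).ncard ≤ 1) :
    ∃ (w : V) (q : H.Walk u w), q.IsPath ∧ (∀ x, x ∈ q.support ↔ H.Reachable u x) ∧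
      ∀ x y, x ∈ q.support → H.Adj x y → s(x, y) ∈ q.edges := by
  obtain ⟨w, q', hq', hmax⟩ :=
    (Walk.nil : H.Walk u u).exists_isPath_forall_adj_mem_support .nil
  have hedges : ∀ x y, x ∈ q'.reverse.support → H.Adj x y → s(x, y) ∈ q'.reverse.edges := by
    intro x y hx hxy
    by_cases hxw : x = w
    · subst hxw
      rw [Sym2.eq_swap]
      exact hq'.reverse.mk_mem_edges_of_adj hdeg hu (by simpa using hmax y hxy) hxy.ne'
        hxy.symm
    · exact hq'.reverse.mk_mem_edges_of_adj hdeg hu hx hxw hxy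
  have hclosed : ∀ {y x} (r : H.Walk y x), y ∈ q'.reverse.support →
      x ∈ q'.reverse.support := by
    intro y x r hy
    induction r with
    | nil => exact hy
    | cons hadj r ih => exact ih (q'.reverse.snd_mem_support_of_mem_edges (hedges _ _ hy hadj))
  classical
  exact ⟨w, q'.reverse, hq'.reverse, fun x => ⟨fun hx => ⟨q'.reverse.takeUntil x hx⟩,
    fun ⟨r⟩ => hclosed r q'.reverse.start_mem_support⟩, hedges⟩

namespace Walk

theorem disjoint_setOf_mem_edges {u v x y : V} {q : G.Walk u v} {r : H.Walk x y}
    (hdisj : ∀ z ∈ q.support, z ∉ r.support) :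
    Disjoint {e | e ∈ q.edges} {e | e ∈ r.edges} := by
  refine Set.disjoint_left.mpr fun e hq hr => ?_
  induction e using Sym2.ind
  exact hdisj _ (q.fst_mem_support_of_mem_edges hq) (r.fst_mem_support_of_mem_edges hr)

theorem IsPath.append_cons {u w x y : V} {q : G.Walk u w} {M : G.Walk x y} (hq : q.IsPath)
    (hM : M.IsPath) (h : G.Adj w x) (hdisj : ∀ v ∈ q.support, v ∉ M.support) :
    (q.append (cons h M)).IsPath := by
  rw [isPath_def, support_append, support_cons, List.tail_cons]
  exact List.Nodup.append hq.support_nodup hM.support_nodup fun v hq hM => hdisj v hq hM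

variable {a b : V} {p : G.Walk a b}

theorem IsPath.ncard_support (hp : p.IsPath) : {x | x ∈ p.support}.ncard = p.length + 1 := by
  rw [List.ncard_setOf_mem hp.support_nodup, length_support]

theorem IsPath.ncard_edges (hp : p.IsPath) : {e | e ∈ p.edges}.ncard = p.length := by
  rw [List.ncard_setOf_mem hp.edges_nodup, length_edges]

theorem IsPath.card_add_ncard_edges_inter_eq [Fintype V] {u₁ w₁ u₂ w₂ : V} (hp : p.IsPath)
    {q₁ : H.Walk u₁ w₁} {q₂ : H.Walk u₂ w₂} (hq₁ : q₁.IsPath) (hq₂ : q₂.IsPath)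
    (hsupp : ∀ x, x ∈ p.support ↔ x ∉ q₁.support ∧ x ∉ q₂.support)
    (hdisj : ∀ x ∈ q₁.support, x ∉ q₂.support)
    (hcover : ∀ e ∈ H.edgeSet, e ∈ q₁.edges ∨ e ∈ q₂.edges ∨ e ∈ p.edges) :
    Fintype.card V + ({e | e ∈ p.edges} ∩ H.edgeSet).ncard = H.edgeSet.ncard + p.length + 3 := by
  have hq₁p : ∀ x ∈ q₁.support, x ∉ p.support := fun x hx hp => ((hsupp x).mp hp).1 hx
  have hq₂p : ∀ x ∈ q₂.support, x ∉ p.support := fun x hx hp => ((hsupp x).mp hp).2 hx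
  have hV : Fintype.card V = p.length + 1 + (q₁.length + 1) + (q₂.length + 1) := by
    have hP : {x | x ∈ p.support} = ({x | x ∈ q₁.support} ∪ {x | x ∈ q₂.support})ᶜ := by
      ext x; simp [hsupp]
    have := Set.ncard_compl_add_ncard ({x | x ∈ q₁.support} ∪ {x | x ∈ q₂.support})
    rwa [← hP, hp.ncard_support, Set.ncard_union_eq (s := {x | x ∈ q₁.support})
      (t := {x | x ∈ q₂.support}) (Set.disjoint_left.mpr hdisj), hq₁.ncard_support,
      hq₂.ncard_support, Nat.card_eq_fintype_card, eq_comm, ← add_assoc] at this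
  have hE : H.edgeSet =
      {e | e ∈ q₁.edges} ∪ {e | e ∈ q₂.edges} ∪ ({e | e ∈ p.edges} ∩ H.edgeSet) := by
    refine Set.Subset.antisymm (fun e he => ?_) (Set.union_subset (Set.union_subset
      (fun _ he => q₁.edges_subset_edgeSet he) (fun _ he => q₂.edges_subset_edgeSet he))
      Set.inter_subset_right)
    rcases hcover e he with h | h | h
    exacts [.inl (.inl h), .inl (.inr h), .inr ⟨h, he⟩]
  have hE' : H.edgeSet.ncard =
      q₁.length + q₂.length + ({e | e ∈ p.edges} ∩ H.edgeSet).ncard := by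
    conv_lhs => rw [hE]
    rw [Set.ncard_union_eq, Set.ncard_union_eq (disjoint_setOf_mem_edges hdisj),
      hq₁.ncard_edges, hq₂.ncard_edges]
    exact Set.disjoint_union_left.mpr ⟨(disjoint_setOf_mem_edges hq₁p).mono_right
      Set.inter_subset_left, (disjoint_setOf_mem_edges hq₂p).mono_right Set.inter_subset_left⟩
  omega

theorem IsPath.ncard_setOf_mk_mem_le (hp : p.IsPath) (B : Set (Sym2 V)) :
    {i | i < p.length ∧ s(p.getVert i, p.getVert (i + 1)) ∈ B}.ncard ≤
      ({e | e ∈ p.edges} ∩ B).ncard := by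
  have hedge : ∀ i (hi : i < p.length),
      p.edges[i]'(by simpa using hi) = s(p.getVert i, p.getVert (i + 1)) :=
    fun i _ => getElem_edges _
  refine Set.ncard_le_ncard_of_injOn _ (fun i ⟨hi, hB⟩ => ⟨?_, hB⟩)
    (fun i ⟨hi, _⟩ j ⟨hj, _⟩ h => ?_) ((List.finite_toSet p.edges).inter_of_left B)
  · rw [← hedge i hi]
    exact List.getElem_mem _
  · rwa [← hedge i hi, ← hedge j hj, hp.edges_nodup.getElem_inj_iff] at h

theorem IsPath.sigmaTwo_le_ncard_add_ncard [Fintype V] {s : ℕ} (hF : SigmaTwoGE F s)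
    (hp : p.IsPath) {w : V} (hw : w ∉ p.support) (hwa : ¬F.Adj w a) (hwb : ¬F.Adj w b) :
    s + 2 * (p.length + 2) ≤ {i | i < p.length ∧ F.Adj w (p.getVert i)}.ncard +
      {i | i < p.length ∧ F.Adj a (p.getVert (i + 1))}.ncard + 2 * Fintype.card V := by
  set S := {i | i < p.length ∧ F.Adj w (p.getVert i)}
  set T := {i | i < p.length ∧ F.Adj a (p.getVert (i + 1))}
  set R := {x | x ∈ p.support}ᶜ \ {w} with hR_def
  have hR : R.ncard + p.length + 2 = Fintype.card V := by
    have := Set.ncard_compl_add_ncard {x | x ∈ p.support}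
    rw [hp.ncard_support, Nat.card_eq_fintype_card] at this
    have := Set.ncard_sdiff_singleton_add_one (s := {x | x ∈ p.support}ᶜ) hw
    rw [← hR_def] at this
    omega
  have hNw : F.neighborSet w ⊆ p.getVert '' S ∪ R := by
    intro y (hy : F.Adj w y)
    by_cases hyp : y ∈ p.support
    · obtain ⟨j, rfl, hj⟩ := mem_support_iff_exists_getVert.mp hyp
      refine .inl ⟨j, ⟨lt_of_le_of_ne hj fun h => hwb ?_, hy⟩, rfl⟩
      rwa [h, getVert_length] at hy
    · exact .inr ⟨hyp, hy.ne'⟩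
  have hNa : F.neighborSet a ⊆ (fun i => p.getVert (i + 1)) '' T ∪ R := by
    intro y (hy : F.Adj a y)
    by_cases hyp : y ∈ p.support
    · obtain ⟨j, rfl, hj⟩ := mem_support_iff_exists_getVert.mp hyp
      have hj0 : j ≠ 0 := fun h => hy.ne (by rw [h, getVert_zero])
      have hj' : j - 1 + 1 = j := by omega
      exact .inl ⟨j - 1, ⟨by omega, by rwa [hj']⟩, by simp only [hj']⟩
    · exact .inr ⟨hyp, fun h => hwa (h ▸ hy.symm)⟩
  have hS := Set.ncard_image_le (f := p.getVert)
    ((Set.finite_Iio p.length).subset fun _ h => h.1 : S.Finite)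
  have hT := Set.ncard_image_le (f := fun i => p.getVert (i + 1))
    ((Set.finite_Iio p.length).subset fun _ h => h.1 : T.Finite)
  have hσ := hF (by rintro rfl; exact hw p.start_mem_support) hwa
  have := (Set.ncard_le_ncard hNw).trans (Set.ncard_union_le _ _)
  have := (Set.ncard_le_ncard hNa).trans (Set.ncard_union_le _ _)
  omega

def IsRerouting {x y : V} (F : SimpleGraph V) (B : Set (Sym2 V)) (p : G.Walk a b)
    (M : G.Walk x y) : Prop :=
  M.IsPath ∧ (∀ v, v ∈ M.support ↔ v ∈ p.support) ∧
    (∃ E : Set (Sym2 V), E.Subsingleton ∧ E ⊆ F.edgeSet ∧ ∀ e ∈ M.edges, e ∈ p.edges ∨ e ∈ E) ∧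
    ∀ e ∈ p.edges, e ∈ B → e ∈ M.edges

variable {B : Set (Sym2 V)}

theorem IsPath.isRerouting_self (hp : p.IsPath) : p.IsRerouting F B p :=
  ⟨hp, fun _ => .rfl, ⟨∅, Set.subsingleton_empty, Set.empty_subset _, fun _ => .inl⟩,
    fun _ he _ => he⟩

theorem IsPath.isRerouting_reverse (hp : p.IsPath) : p.IsRerouting F B p.reverse :=
  ⟨hp.reverse, by simp, ⟨∅, Set.subsingleton_empty, Set.empty_subset _, by simp⟩,
    fun _ he _ => by simpa using he⟩

theorem IsPath.isRerouting_rotate (hp : p.IsPath) {i : ℕ} (hi : i < p.length)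
    (h : G.Adj a (p.getVert (i + 1))) (hF : F.Adj a (p.getVert (i + 1)))
    (hB : s(p.getVert i, p.getVert (i + 1)) ∉ B) :
    p.IsRerouting F B ((p.take i).reverse.append (cons h (p.drop (i + 1)))) := by
  have hsupp : ((p.take i).reverse.append (cons h (p.drop (i + 1)))).support.Perm p.support := by
    rw [support_append, support_reverse, support_cons, List.tail_cons, support_take,
      drop_support_eq_support_drop_min, min_eq_left (by omega)]
    exact ((List.reverse_perm _).append_right _).trans (by rw [List.take_append_drop])
  have hedges : p.edges = p.edges.take i ++ s(p.getVert i, p.getVert (i + 1)) ::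
      p.edges.drop (i + 1) := by
    have hi' : i < p.edges.length := by simpa using hi
    conv_lhs => rw [← List.take_append_drop i p.edges, List.drop_eq_getElem_cons hi',
      getElem_edges]
  refine ⟨(isPath_def _).mpr (hsupp.nodup_iff.mpr hp.support_nodup), fun v => hsupp.mem_iff,
    ⟨{s(a, p.getVert (i + 1))}, Set.subsingleton_singleton, by simpa using hF, ?_⟩, ?_⟩
  · intro e he
    simp only [edges_append, edges_reverse, edges_cons, edges_take, edges_drop, List.mem_append,
      List.mem_reverse, List.mem_cons] at he
    rw [hedges]
    simp only [List.mem_append, List.mem_cons]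
    tauto
  · intro e he heB
    rw [hedges] at he
    simp only [edges_append, edges_reverse, edges_cons, edges_take, edges_drop, List.mem_append,
      List.mem_reverse, List.mem_cons] at he ⊢
    rcases he with he | rfl | he
    · exact .inl he
    · exact absurd heB hB
    · exact .inr (.inr he)

theorem IsPath.exists_isRerouting [Fintype V] {ι : Type*} {G : ι → SimpleGraph V} {A : Set ι}
    (hA : 1 < A.ncard) {s : ℕ} (hσ : ∀ f ∈ A, SigmaTwoGE (G f) s)
    {p : (⊤ : SimpleGraph V).Walk a b} (hp : p.IsPath) {w : V} (hw : w ∉ p.support)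
    (hcount : 2 * Fintype.card V + ({e | e ∈ p.edges} ∩ B).ncard < s + p.length + 4) :
    ∃ g₁ ∈ A, ∃ g₂ ∈ A, g₁ ≠ g₂ ∧ ∃ (x b' : V) (M : (⊤ : SimpleGraph V).Walk x b'),
      (G g₁).Adj w x ∧ p.IsRerouting (G g₂) B M := by
  by_cases hdirect : ∃ f ∈ A, ∃ f' ∈ A, f ≠ f' ∧ ((G f).Adj w a ∨ (G f).Adj w b)
  · obtain ⟨f, hf, f', hf', hne, ha | hb⟩ := hdirect
    · exact ⟨f, hf, f', hf', hne, a, b, p, ha, hp.isRerouting_self⟩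
    · exact ⟨f, hf, f', hf', hne, b, a, p.reverse, hb, hp.isRerouting_reverse⟩
  push Not at hdirect
  obtain ⟨f₁, f₂, hf₁, hf₂, hne⟩ :=
    (Set.one_lt_ncard_iff (Set.finite_of_ncard_pos (by omega))).mp hA
  set S := fun f => {i | i < p.length ∧ (G f).Adj w (p.getVert i)}
  set T := fun f => {i | i < p.length ∧ (G f).Adj a (p.getVert (i + 1))}
  have h₁ := hp.sigmaTwo_le_ncard_add_ncard (hσ f₁ hf₁) hw (hdirect f₁ hf₁ f₂ hf₂ hne).1
    (hdirect f₁ hf₁ f₂ hf₂ hne).2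
  have h₂ := hp.sigmaTwo_le_ncard_add_ncard (hσ f₂ hf₂) hw (hdirect f₂ hf₂ f₁ hf₁ hne.symm).1
    (hdirect f₂ hf₂ f₁ hf₁ hne.symm).2
  have hbad := hp.ncard_setOf_mk_mem_le B
  obtain ⟨g₁, hg₁, g₂, hg₂, hg, hST⟩ : ∃ g₁ ∈ A, ∃ g₂ ∈ A, g₁ ≠ g₂ ∧
      p.length + {i | i < p.length ∧ s(p.getVert i, p.getVert (i + 1)) ∈ B}.ncard <
        (S g₁).ncard + (T g₂).ncard := by
    rcases le_total ((S f₁).ncard + (T f₂).ncard) ((S f₂).ncard + (T f₁).ncard) with h | h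
    · exact ⟨f₂, hf₂, f₁, hf₁, hne.symm, by simp only [S, T] at h ⊢; omega⟩
    · exact ⟨f₁, hf₁, f₂, hf₂, hne, by simp only [S, T] at h ⊢; omega⟩
  obtain ⟨i, ⟨⟨hi, hwx⟩, -, hax⟩, hB⟩ := Set.exists_mem_inter_notMem_of_ncard_lt
    (fun _ h => h.1) (fun _ h => h.1) (fun _ h => h.1) hST
  exact ⟨g₁, hg₁, g₂, hg₂, hg, _, b, _, hwx,
    hp.isRerouting_rotate hi ((top_adj _ _).mpr hax.ne) hax fun h => hB ⟨hi, h⟩⟩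

theorem IsRerouting.exists_rainbow_attach {n : ℕ} {G : Fin n → SimpleGraph V}
    {c d : Sym2 V → Fin n} {D : Set (Sym2 V)} (hd : RainbowColoring G D d)
    (hHD : H.edgeSet ⊆ D) (hdc : ∀ e ∈ H.edgeSet, d e = c e) {g₁ g₂ : Fin n} (hg : g₁ ≠ g₂)
    (hg₁ : ∀ e ∈ D, d e ≠ g₁) (hg₂ : ∀ e ∈ D, d e ≠ g₂) {u w x b' : V}
    {q : (⊤ : SimpleGraph V).Walk u w} (hq : q.IsPath) (hqD : ∀ e ∈ q.edges, e ∈ D)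
    {p : (⊤ : SimpleGraph V).Walk a b} (hpD : ∀ e ∈ p.edges, e ∈ D)
    (hqp : ∀ y ∈ q.support, y ∉ p.support) {M : (⊤ : SimpleGraph V).Walk x b'}
    (hM : p.IsRerouting (G g₂) B M) (hwx : (G g₁).Adj w x) :
    ∃ (P₀ : (⊤ : SimpleGraph V).Walk u b') (c₀ : Sym2 V → Fin n), P₀.IsPath ∧
      (∀ y, y ∈ P₀.support ↔ y ∈ q.support ∨ y ∈ p.support) ∧
      (∀ e ∈ q.edges, e ∈ P₀.edges) ∧ (∀ e ∈ p.edges, e ∈ B → e ∈ P₀.edges) ∧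
      RainbowColoring G {e | e ∈ P₀.edges} c₀ ∧ (∀ e ∈ P₀.edges, e ∈ H.edgeSet → c₀ e = c e) ∧
      ∀ e ∈ P₀.edges, e ∉ H.edgeSet → ∀ e' ∈ H.edgeSet, c₀ e ≠ c e' := by
  classical
  obtain ⟨hMp, hMsupp, ⟨E, hE, hEG, hME⟩, hMB⟩ := hM
  have hd₁ := hd.union_const hE hEG hg₂
  have hd₂ := hd₁.union_const (Set.subsingleton_singleton (a := s(w, x))) (by simpa using hwx)
    fun e he => by
      by_cases heD : e ∈ D
      · rw [Set.piecewise_eq_of_mem _ _ _ heD]; exact hg₁ e heD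
      · rw [Set.piecewise_eq_of_notMem _ _ _ heD]; exact hg.symm
  refine ⟨q.append (cons ((top_adj _ _).mpr hwx.ne) M), _,
    hq.append_cons hMp _ fun y hy hyM => hqp y hy ((hMsupp y).mp hyM), fun y => ?_,
    fun e he => by simp [he], fun e he heB => by simp [hMB e he heB],
    hd₂.agree_of_subset (fun e he => .inl (.inl (hHD he))) (fun e he => ?_) fun e he => ?_⟩
  · simp [support_append, hMsupp]
  · rw [Set.piecewise_eq_of_mem _ _ _ (.inl (hHD he)), Set.piecewise_eq_of_mem _ _ _ (hHD he),
      hdc e he]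
  · simp only [Set.mem_ofPred_eq, edges_append, edges_cons, List.mem_append, List.mem_cons] at he
    rcases he with he | rfl | he
    · exact .inl (.inl (hqD e he))
    · exact .inr rfl
    · exact (hME e he).elim (fun he => .inl (.inl (hpD e he))) fun he => .inl (.inr he)

end Walk

end SimpleGraph

theorem attach_u_component_to_rainbow_path_general
    {V : Type*} [Fintype V] {n k q : ℕ}
    (hV : Fintype.card V = n)
    (G : Fin n → SimpleGraph V) (hσ : ∀ i : Fin n, SigmaTwoGE (G i) (n + k))
    (H : SimpleGraph V) (hH : IsLinearForest H) (hHk : H.edgeSet.ncard = k)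
    (c : Sym2 V → Fin n) (hc : RainbowColoring G H.edgeSet c)
    (u v : V) (hu : (H.neighborSet u).ncard ≤ 1) (hv : (H.neighborSet v).ncard ≤ 1)
    (huv : ¬ H.Reachable u v)
    (vj : Fin q → V)
    (hcomp : ∀ w ∈ H.support,
      H.Reachable u w ∨ H.Reachable v w ∨ ∃ j, H.Reachable (vj j) w)
    -- the rainbow path `P*` with vertex set exactly `V ∖ (V(H_u) ∪ V(H_v))`
    (a b : V) (p : (⊤ : SimpleGraph V).Walk a b) (hp : p.IsPath)
    (hpsupp : {w | w ∈ p.support} = ({w | H.Reachable u w} ∪ {w | H.Reachable v w})ᶜ)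
    (cP : Sym2 V → Fin n) (hcP : RainbowColoring G {e | e ∈ p.edges} cP)
    (hPabsorb : ∀ e ∈ H.edgeSet, (∃ j, ∃ x ∈ e, H.Reachable (vj j) x) → e ∈ p.edges)
    (hPH : ∀ e ∈ p.edges, e ∉ H.edgeSet → ∀ e' ∈ H.edgeSet, cP e ≠ c e') :
    -- conclusion: the rainbow path `P₀` starting at `u`
    ∃ (b' : V) (p₀ : (⊤ : SimpleGraph V).Walk u b') (c₀ : Sym2 V → Fin n),
      p₀.IsPath ∧
      {w | w ∈ p₀.support} = {w | w ∈ p.support} ∪ {w | H.Reachable u w} ∧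
      RainbowColoring G {e | e ∈ p₀.edges} c₀ ∧
      (∀ e ∈ H.edgeSet,
        ((∃ j, ∃ x ∈ e, H.Reachable (vj j) x) ∨ (∃ x ∈ e, H.Reachable u x)) → e ∈ p₀.edges) ∧
      (∀ e ∈ p₀.edges, e ∈ H.edgeSet → c₀ e = c e) ∧
      (∀ e ∈ p₀.edges, e ∉ H.edgeSet → ∀ e' ∈ H.edgeSet, c₀ e ≠ c e') := by
  classical
  obtain ⟨w, qu, hqu, hqu_supp, hqu_edges⟩ := exists_isPath_support_eq_reachable hH.2 hu
  obtain ⟨_, qv, hqv, hqv_supp, hqv_edges⟩ := exists_isPath_support_eq_reachable hH.2 hv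
  have hp_supp : ∀ x, x ∈ p.support ↔ x ∉ qu.support ∧ x ∉ qv.support := fun x => by
    simpa [hqu_supp, hqv_supp, not_or] using Set.ext_iff.mp hpsupp x
  have hcover : ∀ e ∈ H.edgeSet, e ∈ qu.edges ∨ e ∈ qv.edges ∨ e ∈ p.edges := by
    intro e he
    induction e using Sym2.ind with | _ x y => ?_
    rcases hcomp x ⟨y, he⟩ with h | h | ⟨j, h⟩
    · exact .inl (hqu_edges x y ((hqu_supp x).mpr h) he)
    · exact .inr (.inl (hqv_edges x y ((hqv_supp x).mpr h) he))
    · exact .inr (.inr (hPabsorb _ he ⟨j, x, Sym2.mem_mk_left x y, h⟩))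
  have hcount := hp.card_add_ncard_edges_inter_eq hqu hqv hp_supp
    (fun x hx hx' => huv (((hqu_supp x).mp hx).trans ((hqv_supp x).mp hx').symm)) hcover
  have hd := hc.union_piecewise hcP hPH
  have hA := Set.one_lt_ncard_compl_image_piecewise c cP
    (by rw [hp.ncard_edges]; omega : H.edgeSet.ncard + _ + 2 ≤ n + _)
  have hw : w ∉ p.support := fun h => ((hp_supp w).mp h).1 qu.end_mem_support
  obtain ⟨g₁, hg₁, g₂, hg₂, hg, x, b', M, hwx, hM⟩ :=
    hp.exists_isRerouting hA (fun f _ => hσ f) hw (B := H.edgeSet) (by omega)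
  obtain ⟨P₀, c₀, hP₀, hsupp₀, hqu₀, hB₀, h₃, h₅, h₆⟩ := hM.exists_rainbow_attach hd
    Set.subset_union_left (fun e he => Set.piecewise_eq_of_mem _ _ _ he) hg
    (fun e he h => hg₁ ⟨e, he, h⟩) (fun e he h => hg₂ ⟨e, he, h⟩) (hqu.mapLe le_top)
    (fun e he => .inl (qu.edges_subset_edgeSet (by simpa using he))) (fun e he => .inr he)
    (fun y hy hyp => ((hp_supp y).mp hyp).1 (by simpa using hy)) hwx
  refine ⟨b', P₀, c₀, hP₀, ?_, h₃, ?_, h₅, h₆⟩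
  · ext y
    simp [hsupp₀, hqu_supp, or_comm]
  · rintro e he (⟨j, y, hy, hj⟩ | ⟨y, hy, hyu⟩)
    · exact hB₀ e (hPabsorb e he ⟨j, y, hy, hj⟩) he
    · obtain ⟨z, rfl⟩ := (Sym2.mem_iff_exists).mp hy
      exact hqu₀ _ (by simpa using hqu_edges y z ((hqu_supp y).mpr hyu) he)

/-- Claim 2 of the proof of Theorem `mainthm2`: attaching the component
`H_u` to an end of the rainbow path `P*`.  The component of a vertex `w` in `H` is encoded via
`H.Reachable w ·`; `V(H_u) = {w | H.Reachable u w}` and `V(H_v) = {w | H.Reachable v w}`. -/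
theorem attach_u_component_to_rainbow_path
    {V : Type*} [Fintype V] [DecidableEq V] {n k q : ℕ}
    (hk : 3 * k + 4 ≤ n) (hV : Fintype.card V = n)
    (G : Fin n → SimpleGraph V) (hσ : ∀ i : Fin n, SigmaTwoGE (G i) (n + k))
    (H : SimpleGraph V) (hH : IsLinearForest H) (hHk : H.edgeSet.ncard = k)
    (c : Sym2 V → Fin n) (hc : RainbowColoring G H.edgeSet c)
    (u v : V) (hu : (H.neighborSet u).ncard ≤ 1) (hv : (H.neighborSet v).ncard ≤ 1)
    (huv : ¬ H.Reachable u v)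
    (vj : Fin q → V)
    (hvjend : ∀ j, (H.neighborSet (vj j)).ncard = 1)
    (hvju : ∀ j, ¬ H.Reachable u (vj j)) (hvjv : ∀ j, ¬ H.Reachable v (vj j))
    (hvjdist : ∀ j j', j ≠ j' → ¬ H.Reachable (vj j) (vj j'))
    (hcomp : ∀ w ∈ H.support,
      H.Reachable u w ∨ H.Reachable v w ∨ ∃ j, H.Reachable (vj j) w)
    -- the rainbow path `P*` with vertex set exactly `V ∖ (V(H_u) ∪ V(H_v))`
    (a b : V) (p : (⊤ : SimpleGraph V).Walk a b) (hp : p.IsPath)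
    (hpsupp : {w | w ∈ p.support} = ({w | H.Reachable u w} ∪ {w | H.Reachable v w})ᶜ)
    (cP : Sym2 V → Fin n) (hcP : RainbowColoring G {e | e ∈ p.edges} cP)
    (hPabsorb : ∀ e ∈ H.edgeSet, (∃ j, ∃ x ∈ e, H.Reachable (vj j) x) → e ∈ p.edges)
    (hPagree : ∀ e ∈ p.edges, e ∈ H.edgeSet → cP e = c e)
    (hPH : ∀ e ∈ p.edges, e ∉ H.edgeSet → ∀ e' ∈ H.edgeSet, cP e ≠ c e') :
    -- conclusion: the rainbow path `P₀` starting at `u`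
    ∃ (b' : V) (p₀ : (⊤ : SimpleGraph V).Walk u b') (c₀ : Sym2 V → Fin n),
      p₀.IsPath ∧
      {w | w ∈ p₀.support} = {w | w ∈ p.support} ∪ {w | H.Reachable u w} ∧
      RainbowColoring G {e | e ∈ p₀.edges} c₀ ∧
      (∀ e ∈ H.edgeSet,
        ((∃ j, ∃ x ∈ e, H.Reachable (vj j) x) ∨ (∃ x ∈ e, H.Reachable u x)) → e ∈ p₀.edges) ∧
      (∀ e ∈ p₀.edges, e ∈ H.edgeSet → c₀ e = c e) ∧
      (∀ e ∈ p₀.edges, e ∉ H.edgeSet → ∀ e' ∈ H.edgeSet, c₀ e ≠ c e') :=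
  attach_u_component_to_rainbow_path_general hV G hσ H hH hHk c hc u v hu hv huv vj hcomp a b p hp
    hpsupp cP hcP hPabsorb hPH
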